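/- Let A ∈ ℝ^{n×n} be Metzler, let E ∈ ℝ^{n×p} and C ∈ ℝ^{q×n} be entrywise nonnegative, let F ∈ ℝ^{q×p}, let T̄ > 0 and γ ∈ ℝ, and let λ_i, λ_j ∈ ℝ^n. Suppose that Aλ_i + E𝟙 < 0 and that C(λ_i + e^{Aτ}(λ_j − λ_i)) + F𝟙 − γ𝟙 < 0 for all τ ∈ [0,T̄]. Then C(e^{Aτ}λ_j + ∫₀^{τ} e^{A(τ−s)} E𝟙 ds) + F𝟙 < γ𝟙 for all τ ∈ [0,T̄]. -/

import Mathlib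

/-!
A Metzler matrix becomes entrywise nonnegative after adding a multiple of the identity, so
`e^{tA} = e^{-ct} e^{t(A + cI)} ≥ 0` for `t ≥ 0`. Positivity of the flow turns `E𝟙 ≤ -Aλᵢ` into
`∫₀^τ e^{A(τ-s)} E𝟙 ds ≤ ∫₀^τ e^{As}(-Aλᵢ) ds = λᵢ - e^{Aτ}λᵢ`, hence
`e^{Aτ}λⱼ + ∫₀^τ e^{A(τ-s)} E𝟙 ds ≤ λᵢ + e^{Aτ}(λⱼ - λᵢ)`, and the nonnegative `C` preserves
this bound.
-/

open Matrix

/-- A square real matrix is Metzler if all its off-diagonal entries are nonnegative. -/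
def Metzler {n : ℕ} (A : Matrix (Fin n) (Fin n) ℝ) : Prop :=
  ∀ i j, i ≠ j → 0 ≤ A i j

open NormedSpace

attribute [local instance] Matrix.linftyOpNormedRing Matrix.linftyOpNormedAlgebra

namespace Matrix

variable {m ι : Type*} [Fintype ι]

theorem mulVec_mono_of_nonneg {M : Matrix m ι ℝ} (hM : ∀ i j, 0 ≤ M i j) {v w : ι → ℝ}
    (hvw : v ≤ w) : M *ᵥ v ≤ M *ᵥ w :=
  fun i => dotProduct_le_dotProduct_of_nonneg_left hvw (hM i)

variable [DecidableEq ι]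

theorem exp_apply_nonneg {B : Matrix ι ι ℝ} (hB : ∀ i j, 0 ≤ B i j) (i j : ι) :
    0 ≤ exp B i j := by
  have hsum := exp_series_hasSum_exp' (𝕂 := ℝ) B
  exact (Pi.hasSum.mp (Pi.hasSum.mp hsum i) j).nonneg fun k =>
    mul_nonneg (by positivity) (pow_apply_nonneg hB k i j)

theorem exp_add_smul_one (B : Matrix ι ι ℝ) (c : ℝ) :
    exp (B + c • (1 : Matrix ι ι ℝ)) = Real.exp c • exp B := by
  have hc : exp (algebraMap ℝ (Matrix ι ι ℝ) c) = algebraMap ℝ (Matrix ι ι ℝ) (Real.exp c) := by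
    rw [Real.exp_eq_exp_ℝ]
    exact (algebraMap_exp_comm c).symm
  rw [exp_add_of_commute _ _ ((Commute.one_right B).smul_right c), ← Algebra.algebraMap_eq_smul_one,
    hc, Algebra.algebraMap_eq_smul_one, mul_smul_one]

theorem exp_apply_nonneg_of_add_smul_one {B : Matrix ι ι ℝ} {c : ℝ}
    (hB : ∀ i j, 0 ≤ (B + c • (1 : Matrix ι ι ℝ)) i j) (i j : ι) : 0 ≤ exp B i j := by
  have h := exp_apply_nonneg hB i j
  rw [exp_add_smul_one, smul_apply, smul_eq_mul] at h
  exact nonneg_of_mul_nonneg_right h (Real.exp_pos c)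

end Matrix

namespace Metzler

variable {n : ℕ} {A : Matrix (Fin n) (Fin n) ℝ}

theorem smul (hA : Metzler A) {t : ℝ} (ht : 0 ≤ t) : Metzler (t • A) :=
  fun i j hij => mul_nonneg ht (hA i j hij)

theorem exists_add_smul_one_nonneg (hA : Metzler A) :
    ∃ c : ℝ, ∀ i j, 0 ≤ (A + c • (1 : Matrix (Fin n) (Fin n) ℝ)) i j := by
  refine ⟨∑ k, |A k k|, fun i j => ?_⟩
  rcases eq_or_ne i j with rfl | hij
  · have hdiag : |A i i| ≤ ∑ k, |A k k| :=
      Finset.single_le_sum (fun k _ => abs_nonneg (A k k)) (Finset.mem_univ i)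
    simp only [Matrix.add_apply, Matrix.smul_apply, one_apply_eq, smul_eq_mul, mul_one]
    linarith [neg_abs_le (A i i)]
  · simpa [one_apply_ne hij] using hA i j hij

theorem exp_apply_nonneg (hA : Metzler A) (i j : Fin n) : 0 ≤ exp A i j :=
  let ⟨_, hc⟩ := hA.exists_add_smul_one_nonneg
  Matrix.exp_apply_nonneg_of_add_smul_one hc i j

end Metzler

section VariationOfConstants

variable {ι : Type*} [Fintype ι] [DecidableEq ι] (A : Matrix ι ι ℝ) (v : ι → ℝ)

theorem hasDerivAt_exp_smul_mulVec (t : ℝ) :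
    HasDerivAt (fun s : ℝ => exp (s • A) *ᵥ v) (exp (t • A) *ᵥ (A *ᵥ v)) t := by
  let L : Matrix ι ι ℝ →L[ℝ] ι → ℝ := ((mulVecBilin ℝ ℝ).flip v).toContinuousLinearMap
  rw [mulVec_mulVec]
  exact L.hasFDerivAt.comp_hasDerivAt t (hasDerivAt_exp_smul_const A t)

theorem continuous_exp_smul_mulVec : Continuous fun s : ℝ => exp (s • A) *ᵥ v :=
  continuous_iff_continuousAt.mpr fun t => (hasDerivAt_exp_smul_mulVec A v t).continuousAt

theorem integral_exp_smul_mulVec (τ : ℝ) :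
    ∫ s in (0 : ℝ)..τ, exp (s • A) *ᵥ (A *ᵥ v) = exp (τ • A) *ᵥ v - v := by
  rw [intervalIntegral.integral_eq_sub_of_hasDerivAt (fun t _ => hasDerivAt_exp_smul_mulVec A v t)
    ((continuous_exp_smul_mulVec A (A *ᵥ v)).intervalIntegrable 0 τ)]
  simp

end VariationOfConstants

theorem Metzler.integral_exp_sub_smul_mulVec_le {n : ℕ} {A : Matrix (Fin n) (Fin n) ℝ}
    (hA : Metzler A) {w lam : Fin n → ℝ} (hw : A *ᵥ lam + w ≤ 0) {τ : ℝ} (hτ : 0 ≤ τ) :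
    ∫ s in (0 : ℝ)..τ, exp ((τ - s) • A) *ᵥ w ≤ lam - exp (τ • A) *ᵥ lam := by
  have hw' : w ≤ -(A *ᵥ lam) := le_neg_iff_add_nonpos_left.mpr hw
  calc ∫ s in (0 : ℝ)..τ, exp ((τ - s) • A) *ᵥ w
      = ∫ s in (0 : ℝ)..τ, exp (s • A) *ᵥ w := by
        simpa using
          intervalIntegral.integral_comp_sub_left (a := 0) (b := τ) (fun s => exp (s • A) *ᵥ w) τ
    _ ≤ ∫ s in (0 : ℝ)..τ, exp (s • A) *ᵥ -(A *ᵥ lam) := by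
        simp only [intervalIntegral.integral_of_le hτ]
        refine MeasureTheory.setIntegral_mono_on
          ((continuous_exp_smul_mulVec A _).intervalIntegrable 0 τ).1
          ((continuous_exp_smul_mulVec A _).intervalIntegrable 0 τ).1 measurableSet_Ioc
          fun s hs => ?_
        exact mulVec_mono_of_nonneg ((hA.smul hs.1.le).exp_apply_nonneg) hw'
    _ = lam - exp (τ • A) *ᵥ lam := by
        simp only [mulVec_neg, intervalIntegral.integral_neg, integral_exp_smul_mulVec, neg_sub]

theorem blanchini_implies_new_conditions_general {n p q : ℕ}
    (A : Matrix (Fin n) (Fin n) ℝ) (hA : Metzler A)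
    (E : Matrix (Fin n) (Fin p) ℝ) (C : Matrix (Fin q) (Fin n) ℝ)
    (F : Matrix (Fin q) (Fin p) ℝ)
    (hC : ∀ i j, 0 ≤ C i j)
    (Tb γ : ℝ)
    (lami lamj : Fin n → ℝ)
    (h1 : ∀ i, (A *ᵥ lami + E *ᵥ (fun _ => (1:ℝ))) i < 0)
    (h2 : ∀ τ ∈ Set.Icc (0:ℝ) Tb, ∀ i,
      (C *ᵥ (lami + NormedSpace.exp (τ • A) *ᵥ (lamj - lami))
        + F *ᵥ (fun _ => (1:ℝ))) i - γ < 0) :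
    ∀ τ ∈ Set.Icc (0:ℝ) Tb, ∀ i,
      (C *ᵥ (NormedSpace.exp (τ • A) *ᵥ lamj
          + ∫ s in (0:ℝ)..τ, NormedSpace.exp ((τ - s) • A) *ᵥ (E *ᵥ (fun _ => (1:ℝ))))
        + F *ᵥ (fun _ => (1:ℝ))) i < γ := by
  intro τ hτ i
  have hforced := hA.integral_exp_sub_smul_mulVec_le (fun k => (h1 k).le) hτ.1
  have hstate : exp (τ • A) *ᵥ lamj + ∫ s in (0 : ℝ)..τ, exp ((τ - s) • A) *ᵥ (E *ᵥ fun _ => 1)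
      ≤ lami + exp (τ • A) *ᵥ (lamj - lami) :=
    (add_le_add le_rfl hforced).trans_eq (by rw [mulVec_sub]; abel)
  have hout := mulVec_mono_of_nonneg hC hstate i
  have hgain := h2 τ hτ i
  simp only [Pi.add_apply] at hout hgain ⊢
  linarith

/-- The minimum dwell-time `L∞`-gain conditions of Blanchini et al. imply the conditions of
the present paper: from `Aλᵢ + E𝟙 < 0` and
`C(λᵢ + e^{Aτ}(λⱼ − λᵢ)) + F𝟙 − γ𝟙 < 0` on `[0,T̄]` one gets
`C(e^{Aτ}λⱼ + ∫₀^τ e^{A(τ−s)}E𝟙 ds) + F𝟙 < γ𝟙` on `[0,T̄]`. -/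
theorem blanchini_implies_new_conditions {n p q : ℕ}
    (A : Matrix (Fin n) (Fin n) ℝ) (hA : Metzler A)
    (E : Matrix (Fin n) (Fin p) ℝ) (C : Matrix (Fin q) (Fin n) ℝ)
    (F : Matrix (Fin q) (Fin p) ℝ)
    (hE : ∀ i j, 0 ≤ E i j) (hC : ∀ i j, 0 ≤ C i j)
    (Tb γ : ℝ) (hTb : 0 < Tb)
    (lami lamj : Fin n → ℝ)
    (h1 : ∀ i, (A *ᵥ lami + E *ᵥ (fun _ => (1:ℝ))) i < 0)
    (h2 : ∀ τ ∈ Set.Icc (0:ℝ) Tb, ∀ i,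
      (C *ᵥ (lami + NormedSpace.exp (τ • A) *ᵥ (lamj - lami))
        + F *ᵥ (fun _ => (1:ℝ))) i - γ < 0) :
    ∀ τ ∈ Set.Icc (0:ℝ) Tb, ∀ i,
      (C *ᵥ (NormedSpace.exp (τ • A) *ᵥ lamj
          + ∫ s in (0:ℝ)..τ, NormedSpace.exp ((τ - s) • A) *ᵥ (E *ᵥ (fun _ => (1:ℝ))))
        + F *ᵥ (fun _ => (1:ℝ))) i < γ :=
  blanchini_implies_new_conditions_general A hA E C F hC Tb γ lami lamj h1 h2
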